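/- arXiv:1806.05527 — 2 statements merged into one kernel-verified Lean document; each statement's English description precedes it below -/
import Mathlib

section
/- Let Γ be a finite connected multigraph, v0 a vertex of Γ, and μ a degree-d polarization on Γ. Then every degree-d divisor on Γ is equivalent (modulo principal divisors) to a unique (v0,μ)-quasistable degree-d divisor. -/
/-- A finite multigraph: each edge has two (possibly equal) endpoints
(loops and parallel edges are allowed). -/
structure Multigraph where
  V : Type
  E : Type
  [fV : Fintype V]
  [dV : DecidableEq V]
  [fE : Fintype E]
  [dE : DecidableEq E]
  ends1 : E → V
  ends2 : E → V

attribute [instance] Multigraph.fV Multigraph.dV Multigraph.fE Multigraph.dE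

namespace Multigraph

variable (G : Multigraph)

/-- The edge `e` joins the vertices `v` and `w`. -/
def Joins (e : G.E) (v w : G.V) : Prop :=
  (G.ends1 e = v ∧ G.ends2 e = w) ∨ (G.ends1 e = w ∧ G.ends2 e = v)

instance (e : G.E) (v w : G.V) : Decidable (G.Joins e v w) := by
  unfold Joins; infer_instance

/-- `E(A,B)`: the set of edges joining a vertex of `A ∖ B` to a vertex of `B ∖ A`. -/
def betweenSet (A B : Finset G.V) : Finset G.E :=
  Finset.univ.filter fun e => ∃ v ∈ A \ B, ∃ w ∈ B \ A, G.Joins e v w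

/-- `δ_A := |E(A, Aᶜ)|`. -/
def delta (A : Finset G.V) : ℕ := (G.betweenSet A Aᶜ).card

/-- One step along an edge belonging to `S`. -/
def Step (S : Set G.E) (v w : G.V) : Prop := ∃ e ∈ S, G.Joins e v w

/-- The spanning subgraph with edge set `S` is connected. -/
def ConnectedOn (S : Set G.E) : Prop :=
  ∀ v w : G.V, Relation.ReflTransGen (G.Step S) v w

def Connected : Prop := G.ConnectedOn Set.univ

/-- A spanning tree: a subset of edges making a connected spanning subgraph whose number
of edges equals the number of vertices minus one. -/
def IsSpanningTree (T : Finset G.E) : Prop :=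
  G.ConnectedOn ↑T ∧ T.card + 1 = Fintype.card G.V

/-- First Betti number of a connected graph. -/
def firstBetti : ℕ := Fintype.card G.E + 1 - Fintype.card G.V

/-- Degree of a divisor. -/
def deg (D : G.V → ℤ) : ℤ := ∑ v, D v

/-- A degree-`d` polarization. -/
def IsPolarization (μ : G.V → ℝ) (d : ℤ) : Prop := (∑ v, μ v) = (d : ℝ)

/-- `β_D(A) = deg(D|_A) - μ(A) + δ_A / 2`. -/
noncomputable def beta (μ : G.V → ℝ) (D : G.V → ℤ) (A : Finset G.V) : ℝ :=
  (∑ v ∈ A, (D v : ℝ)) - (∑ v ∈ A, μ v) + (G.delta A : ℝ) / 2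

/-- `D` is `(v0,μ)`-quasistable: `β_D(A) ≥ 0` for every proper subset `A` of the vertices,
with strict inequality whenever `v0 ∈ A`. -/
def Quasistable (μ : G.V → ℝ) (v0 : G.V) (D : G.V → ℤ) : Prop :=
  ∀ A : Finset G.V, A ⊂ Finset.univ →
    0 ≤ G.beta μ D A ∧ (v0 ∈ A → 0 < G.beta μ D A)

/-- Number of incidences of `v` with edges in `S` (loops counted twice). -/
def valIn (S : Finset G.E) (v : G.V) : ℕ :=
  ∑ e ∈ S, ((if G.ends1 e = v then 1 else 0) + (if G.ends2 e = v then 1 else 0))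

/-- Valence of a vertex (loops counted twice). -/
def val (v : G.V) : ℕ := G.valIn Finset.univ v

/-- The vertices of the `S`-subdivision: original vertices plus one exceptional vertex
for each edge in `S`. -/
abbrev subV (S : Finset G.E) : Type := G.V ⊕ {e : G.E // e ∈ S}

/-- The `S`-subdivision of `G`: each edge `e ∈ S` is replaced by two edges meeting at a new
exceptional vertex. -/
def subdiv (S : Finset G.E) : Multigraph where
  V := G.subV S
  E := {e : G.E // e ∉ S} ⊕ ({e : G.E // e ∈ S} × Bool)
  ends1 := fun e => match e with
    | Sum.inl x => Sum.inl (G.ends1 x.1)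
    | Sum.inr (x, false) => Sum.inl (G.ends1 x.1)
    | Sum.inr (x, true) => Sum.inr x
  ends2 := fun e => match e with
    | Sum.inl x => Sum.inl (G.ends2 x.1)
    | Sum.inr (x, false) => Sum.inr x
    | Sum.inr (x, true) => Sum.inl (G.ends2 x.1)

/-- The polarization `μ^S` on the `S`-subdivision: `μ` on old vertices, `0` on
exceptional vertices. -/
noncomputable def subPol (S : Finset G.E) (μ : G.V → ℝ) : G.subV S → ℝ :=
  Sum.elim μ fun _ => 0

/-- A divisor on the `S`-subdivision is a pseudo-divisor when it takes value `-1` at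
every exceptional vertex. -/
def IsPseudoDivisor (S : Finset G.E) (D : G.subV S → ℤ) : Prop :=
  ∀ x : {e : G.E // e ∈ S}, D (Sum.inr x) = -1

/-- `(S,D)` is a `(v0,μ)`-quasistable degree-`d` pseudo-divisor on `G`. -/
def QSPseudo (μ : G.V → ℝ) (v0 : G.V) (d : ℤ) (S : Finset G.E)
    (D : G.subV S → ℤ) : Prop :=
  G.IsPseudoDivisor S D ∧ (∑ v, D v) = d ∧
    (G.subdiv S).Quasistable (G.subPol S μ) (Sum.inl v0) D

/-- The graph obtained by deleting the edges in `S`. -/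
def deleteEdges (S : Finset G.E) : Multigraph where
  V := G.V
  E := {e : G.E // e ∉ S}
  ends1 := fun e => G.ends1 e.1
  ends2 := fun e => G.ends2 e.1

/-- A pseudo-divisor on `G`: a subset of edges together with a divisor on the associated
subdivision. -/
def PD : Type := Σ S : Finset G.E, (G.subV S → ℤ)

variable {G}

/-- The specialization (partial) order on pseudo-divisors on a fixed graph:
`PDLe x y` holds when `y` specializes to `x`, i.e. `x.1 ⊆ y.1` and there is a
specialization `Γ^{y.1} → Γ^{x.1}` compatible with the identity of `Γ` (each exceptional
vertex over an edge of `y.1 ∖ x.1` is merged into one of the two endpoints of that edge)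
carrying `y.2` to `x.2`. -/
def PDLe (x y : G.PD) : Prop :=
  ∃ h : x.1 ⊆ y.1, ∃ c : G.E → G.V,
    (∀ e ∈ y.1 \ x.1, c e = G.ends1 e ∨ c e = G.ends2 e) ∧
    (∀ v : G.V, x.2 (Sum.inl v) =
      y.2 (Sum.inl v) + ∑ e ∈ (y.1 \ x.1).attach,
        (if c e.1 = v then y.2 (Sum.inr ⟨e.1, (Finset.mem_sdiff.mp e.2).1⟩) else 0)) ∧
    (∀ (e : G.E) (hx : e ∈ x.1), x.2 (Sum.inr ⟨e, hx⟩) = y.2 (Sum.inr ⟨e, h hx⟩))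

/-- Strict specialization order on pseudo-divisors. -/
def PDLt (x y : G.PD) : Prop := PDLe x y ∧ x ≠ y

variable (G)

/-- The set `QD_{v0,μ}(G)` of `(v0,μ)`-quasistable degree-`d` pseudo-divisors on `G`. -/
def QDSet (μ : G.V → ℝ) (v0 : G.V) (d : ℤ) : Set G.PD :=
  {x | G.QSPseudo μ v0 d x.1 x.2}

end Multigraph

/-- A specialization `G → G'` of multigraphs: the contraction of a subset of the edges of
`G`. It is encoded by the map `vmap` on vertices and the identification `emap` of the
edges of `G'` with the non-contracted edges of `G`; the fibers of `vmap` are exactly the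
connected components spanned by contracted edges. -/
structure Multigraph.Spec (G G' : Multigraph) where
  vmap : G.V → G'.V
  emap : G'.E → G.E
  emap_inj : Function.Injective emap
  vmap_surj : Function.Surjective vmap
  joins_comm : ∀ e' : G'.E,
    G'.Joins e' (vmap (G.ends1 (emap e'))) (vmap (G.ends2 (emap e')))
  glue : ∀ e : G.E, (¬ ∃ e', emap e' = e) → vmap (G.ends1 e) = vmap (G.ends2 e)
  fiber_conn : ∀ v w : G.V, vmap v = vmap w →
    Relation.ReflTransGen
      (fun a b => ∃ e : G.E, (¬ ∃ e', emap e' = e) ∧ G.Joins e a b) v w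

namespace Multigraph.Spec

variable {G G' : Multigraph} (f : Multigraph.Spec G G')

/-- The set of edges contracted by the specialization. -/
def contracted : Finset G.E := Finset.univ.filter fun e => ¬ ∃ e', f.emap e' = e

/-- Pushforward of a polarization. -/
noncomputable def pushPol (μ : G.V → ℝ) : G'.V → ℝ := fun v' => ∑ v, if f.vmap v = v' then μ v else 0

/-- Pushforward of a divisor. -/
def pushDiv (D : G.V → ℤ) : G'.V → ℤ := fun v' => ∑ v, if f.vmap v = v' then D v else 0

/-- The edge set `S ∩ E(G')` of the pushforward of a pseudo-divisor `(S,D)`. -/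
def pushEdges (S : Finset G.E) : Finset G'.E :=
  Finset.univ.filter fun e' => f.emap e' ∈ S

/-- Pushforward of the divisor part of a pseudo-divisor `(S,D)` along the induced
specialization `G^S → G'^{S ∩ E(G')}`. -/
def pushPDFun (S : Finset G.E) (D : G.subV S → ℤ) :
    G'.subV (f.pushEdges S) → ℤ
  | Sum.inl v' => (∑ v, if f.vmap v = v' then D (Sum.inl v) else 0) +
      ∑ e ∈ S.attach,
        (if e.1 ∈ f.contracted ∧ f.vmap (G.ends1 e.1) = v' then D (Sum.inr e) else 0)
  | Sum.inr x => D (Sum.inr ⟨f.emap x.1, (Finset.mem_filter.mp x.2).2⟩)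

/-- Pushforward of a pseudo-divisor along a specialization. -/
def pushPD (x : G.PD) : G'.PD := ⟨f.pushEdges x.1, f.pushPDFun x.1 x.2⟩

end Multigraph.Spec

open Multigraph

namespace Multigraph

/-- The principal divisor `Δf` associated to `f : V → ℤ`: at `v`, the sum over all
non-loop edges incident to `v` (counted with multiplicity) of `f(v) - f(v_e)`, where
`v_e` is the other endpoint (loops contribute `0`). -/
def prin (G : Multigraph) (f : G.V → ℤ) : G.V → ℤ := fun v =>
  ∑ e : G.E,
    ((if G.ends1 e = v then f v - f (G.ends2 e) else 0) +
      (if G.ends2 e = v then f v - f (G.ends1 e) else 0))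

end Multigraph

/-!
Existence: minimize the energy `∑ₑ (df)² - 2 ∑ᵥ (D - μ) f` over integer potentials `f` with
`f v0 = 0` (a finite search, by coercivity on a connected graph), breaking ties by maximizing
`∑ f`. Lowering `f` by one on `B` changes the energy by `2 β_{D - Δf}(B)`, so minimality gives
`β ≥ 0`, and the tie-break (after renormalizing at `v0`) gives `β > 0` when `v0 ∈ B`.

Uniqueness: if `D₁ - D₂ = Δh` with `h` non-constant, let `A` be the set where `h` is maximal.
Then `∑_A Δh ≥ δ_A`, which forces `β_{D₂}(A) + β_{D₁}(Aᶜ) ≤ 0`; but one of `A`, `Aᶜ` contains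
`v0`, so quasistability makes that sum positive.
-/

namespace Multigraph

variable {G : Multigraph}

lemma mem_betweenSet_compl {A : Finset G.V} {e : G.E} :
    e ∈ G.betweenSet A Aᶜ ↔ (G.ends1 e ∈ A ↔ G.ends2 e ∉ A) := by
  simp only [betweenSet, Joins, Finset.mem_filter, Finset.mem_univ, true_and, Finset.mem_sdiff,
    Finset.mem_compl, not_not]
  constructor
  · rintro ⟨v, ⟨hv, -⟩, w, ⟨hw, -⟩, ⟨rfl, rfl⟩ | ⟨rfl, rfl⟩⟩ <;> tauto
  · intro h
    by_cases h1 : G.ends1 e ∈ A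
    · exact ⟨_, ⟨h1, h1⟩, _, ⟨h.1 h1, h.1 h1⟩, Or.inl ⟨rfl, rfl⟩⟩
    · have h2 : G.ends2 e ∈ A := by tauto
      exact ⟨_, ⟨h2, h2⟩, _, ⟨h1, h1⟩, Or.inr ⟨rfl, rfl⟩⟩

lemma delta_compl (A : Finset G.V) : G.delta Aᶜ = G.delta A := by
  unfold delta
  congr 1
  ext e
  rw [mem_betweenSet_compl, ← compl_compl A, mem_betweenSet_compl]
  simp only [compl_compl, Finset.mem_compl]
  tauto

lemma delta_eq_sum_sq (A : Finset G.V) :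
    (G.delta A : ℤ) =
      ∑ e, ((if G.ends1 e ∈ A then 1 else 0) - (if G.ends2 e ∈ A then 1 else 0)) ^ 2 := by
  have hfilter : G.betweenSet A Aᶜ =
      Finset.univ.filter fun e => (G.ends1 e ∈ A ↔ G.ends2 e ∉ A) := by
    ext e
    simp only [mem_betweenSet_compl, Finset.mem_filter, Finset.mem_univ, true_and]
  rw [delta, hfilter, Finset.card_filter, Nat.cast_sum]
  refine Finset.sum_congr rfl fun e _ => ?_
  by_cases h1 : G.ends1 e ∈ A <;> by_cases h2 : G.ends2 e ∈ A <;> simp [h1, h2]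

lemma sum_mul_prin (g f : G.V → ℤ) :
    ∑ v, g v * G.prin f v =
      ∑ e, (g (G.ends1 e) - g (G.ends2 e)) * (f (G.ends1 e) - f (G.ends2 e)) := by
  simp only [prin, Finset.mul_sum]
  rw [Finset.sum_comm]
  refine Finset.sum_congr rfl fun e _ => ?_
  simp only [mul_add, mul_ite, mul_zero, Finset.sum_add_distrib, Finset.sum_ite_eq,
    Finset.mem_univ, if_true]
  ring

lemma sum_prin_eq_zero (f : G.V → ℤ) : ∑ v, G.prin f v = 0 := by
  simpa using sum_mul_prin 1 f

lemma sum_mem_prin (A : Finset G.V) (f : G.V → ℤ) :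
    ∑ v ∈ A, G.prin f v = ∑ e, ((if G.ends1 e ∈ A then 1 else 0) -
      (if G.ends2 e ∈ A then 1 else 0)) * (f (G.ends1 e) - f (G.ends2 e)) := by
  rw [← sum_mul_prin (fun v => if v ∈ A then 1 else 0)]
  simp only [ite_mul, one_mul, zero_mul, Finset.sum_ite_mem, Finset.univ_inter]

lemma prin_sub (f g : G.V → ℤ) (v : G.V) :
    G.prin (fun w => f w - g w) v = G.prin f v - G.prin g v := by
  simp only [prin, ← Finset.sum_sub_distrib]
  refine Finset.sum_congr rfl fun e _ => ?_
  split_ifs <;> ring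

lemma prin_eq_zero_of_const {f : G.V → ℤ} (hf : ∀ v w, f v = f w) (v : G.V) :
    G.prin f v = 0 :=
  Finset.sum_eq_zero fun e _ => by simp [hf _ v]

lemma beta_sub_prin (μ : G.V → ℝ) (D f : G.V → ℤ) (A : Finset G.V) :
    G.beta μ (fun v => D v - G.prin f v) A = G.beta μ D A - ∑ v ∈ A, (G.prin f v : ℝ) := by
  simp only [beta, Int.cast_sub, Finset.sum_sub_distrib]
  ring

lemma beta_add_beta_compl {μ : G.V → ℝ} {d : ℤ} (hμ : G.IsPolarization μ d) {D : G.V → ℤ}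
    (hD : G.deg D = d) (A : Finset G.V) :
    G.beta μ D A + G.beta μ D Aᶜ = G.delta A := by
  have hDsum : ∑ v, (D v : ℝ) = d := by exact_mod_cast hD
  simp only [beta, delta_compl]
  linarith [Finset.sum_add_sum_compl A fun v => (D v : ℝ), Finset.sum_add_sum_compl A μ,
    show ∑ v, μ v = d from hμ]

lemma delta_le_sum_prin_of_isMax {h : G.V → ℤ} {A : Finset G.V}
    (hA : ∀ v, v ∈ A ↔ ∀ w, h w ≤ h v) : (G.delta A : ℤ) ≤ ∑ v ∈ A, G.prin h v := by
  rw [delta_eq_sum_sq, sum_mem_prin]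
  refine Finset.sum_le_sum fun e _ => ?_
  have lt_of_mem_of_notMem : ∀ {a b}, a ∈ A → b ∉ A → h b < h a := fun ha hb => by
    obtain ⟨w, hw⟩ := not_forall.mp ((hA _).not.mp hb)
    exact (not_le.mp hw).trans_le ((hA _).mp ha w)
  by_cases h1 : G.ends1 e ∈ A <;> by_cases h2 : G.ends2 e ∈ A
  · simp [h1, h2]
  · simp only [h1, h2, if_true, if_false]
    linarith [lt_of_mem_of_notMem h1 h2]
  · simp only [h1, h2, if_true, if_false]
    linarith [lt_of_mem_of_notMem h2 h1]
  · simp [h1, h2]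

theorem eq_of_quasistable_of_sub_eq_prin {μ : G.V → ℝ} {d : ℤ} (hμ : G.IsPolarization μ d)
    {v0 : G.V} {D₁ D₂ h : G.V → ℤ} (hD₁ : G.deg D₁ = d) (q₁ : G.Quasistable μ v0 D₁)
    (q₂ : G.Quasistable μ v0 D₂) (hh : ∀ v, D₁ v - D₂ v = G.prin h v) : D₁ = D₂ := by
  have hD₂ : D₂ = fun v => D₁ v - G.prin h v := funext fun v => by linarith [hh v]
  set A := Finset.univ.filter fun v => ∀ w, h w ≤ h v
  have hA : ∀ v, v ∈ A ↔ ∀ w, h w ≤ h v := by simp [A]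
  by_cases hAuniv : A = Finset.univ
  · have hconst : ∀ v w, h v = h w := fun v w => le_antisymm
      ((hA w).mp (hAuniv ▸ Finset.mem_univ w) v) ((hA v).mp (hAuniv ▸ Finset.mem_univ v) w)
    exact funext fun v => by linarith [hh v, prin_eq_zero_of_const hconst v]
  have hA_ss : A ⊂ Finset.univ := Finset.ssubset_univ_iff.mpr hAuniv
  have hAne : A.Nonempty := by
    obtain ⟨x, -⟩ := Finset.exists_of_ssubset hA_ss
    obtain ⟨m, -, hm⟩ := Finset.exists_max_image Finset.univ h ⟨x, Finset.mem_univ x⟩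
    exact ⟨m, (hA m).mpr fun w => hm w (Finset.mem_univ w)⟩
  have hsum : (G.delta A : ℝ) ≤ ∑ v ∈ A, (G.prin h v : ℝ) := by
    exact_mod_cast delta_le_sum_prin_of_isMax hA
  have hbound : G.beta μ D₂ A + G.beta μ D₁ Aᶜ ≤ 0 := by
    rw [hD₂, beta_sub_prin]
    linarith [beta_add_beta_compl hμ hD₁ A]
  have hAc_ss : Aᶜ ⊂ Finset.univ := Finset.ssubset_univ_iff.mpr
    ((Finset.compl_ne_univ_iff_nonempty A).mpr hAne)
  by_cases hv0 : v0 ∈ A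
  · linarith [(q₂ A hA_ss).2 hv0, (q₁ Aᶜ hAc_ss).1]
  · linarith [(q₂ A hA_ss).1, (q₁ Aᶜ hAc_ss).2 (Finset.mem_compl.mpr hv0)]

noncomputable def energy (μ : G.V → ℝ) (D f : G.V → ℤ) : ℝ :=
  ((∑ e, (f (G.ends1 e) - f (G.ends2 e)) ^ 2 : ℤ) : ℝ) - 2 * ∑ v, ((D v : ℝ) - μ v) * f v

lemma energy_add_const {μ : G.V → ℝ} {d : ℤ} (hμ : G.IsPolarization μ d) {D : G.V → ℤ}
    (hD : G.deg D = d) (f : G.V → ℤ) (k : ℤ) :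
    energy μ D (fun v => f v + k) = energy μ D f := by
  have hDsum : ∑ v, (D v : ℝ) = d := by exact_mod_cast hD
  have hlin : ∑ v, ((D v : ℝ) - μ v) * ((f v + k : ℤ) : ℝ) =
      ∑ v, ((D v : ℝ) - μ v) * f v + (∑ v, (D v : ℝ) - ∑ v, μ v) * k := by
    simp only [Int.cast_add, mul_add, Finset.sum_add_distrib, ← Finset.sum_mul,
      Finset.sum_sub_distrib]
  simp only [energy, add_sub_add_right_eq_sub, hlin, hDsum, show ∑ v, μ v = d from hμ]
  ring

lemma sum_sq_sub_indicator (f : G.V → ℤ) (B : Finset G.V) :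
    ∑ e, ((f (G.ends1 e) - if G.ends1 e ∈ B then 1 else 0) -
        (f (G.ends2 e) - if G.ends2 e ∈ B then 1 else 0)) ^ 2 =
      ∑ e, (f (G.ends1 e) - f (G.ends2 e)) ^ 2 - 2 * ∑ v ∈ B, G.prin f v + G.delta B := by
  rw [sum_mem_prin, delta_eq_sum_sq, Finset.mul_sum, ← Finset.sum_sub_distrib,
    ← Finset.sum_add_distrib]
  exact Finset.sum_congr rfl fun e _ => by ring

lemma energy_sub_indicator (μ : G.V → ℝ) (D f : G.V → ℤ) (B : Finset G.V) :
    energy μ D (fun v => f v - if v ∈ B then 1 else 0) =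
      energy μ D f + 2 * G.beta μ (fun v => D v - G.prin f v) B := by
  have hlin : ∑ v, ((D v : ℝ) - μ v) * ((f v - if v ∈ B then 1 else 0 : ℤ) : ℝ) =
      ∑ v, ((D v : ℝ) - μ v) * f v - ∑ v ∈ B, ((D v : ℝ) - μ v) := by
    simp only [Int.cast_sub, Int.cast_ite, Int.cast_one, Int.cast_zero, mul_sub, mul_ite,
      mul_one, mul_zero, Finset.sum_sub_distrib, Finset.sum_ite_mem, Finset.univ_inter]
  rw [energy, energy, sum_sq_sub_indicator, hlin, beta_sub_prin]
  simp only [beta, Int.cast_add, Int.cast_sub, Int.cast_mul, Int.cast_ofNat, Int.cast_natCast,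
    Int.cast_sum, Finset.sum_sub_distrib]
  ring

lemma exists_abs_sub_le_of_reflTransGen {v w : G.V}
    (hvw : Relation.ReflTransGen (G.Step Set.univ) v w) :
    ∃ L : ℕ, ∀ f : G.V → ℤ, |f w - f v| ≤ L * ∑ e, |f (G.ends1 e) - f (G.ends2 e)| := by
  induction hvw with
  | refl => exact ⟨0, fun f => by simp⟩
  | @tail b c _ hstep ih =>
    obtain ⟨L, hL⟩ := ih
    obtain ⟨e, -, he⟩ := hstep
    refine ⟨L + 1, fun f => ?_⟩
    have hedge : |f c - f b| ≤ |f (G.ends1 e) - f (G.ends2 e)| := by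
      rcases he with ⟨rfl, rfl⟩ | ⟨rfl, rfl⟩
      · rw [abs_sub_comm]
      · rfl
    have hsum := Finset.single_le_sum (fun e _ => abs_nonneg (f (G.ends1 e) - f (G.ends2 e)))
      (Finset.mem_univ e)
    push_cast
    linarith [abs_sub_le (f c) (f b) (f v), hL f]

lemma Connected.exists_abs_sub_le (hconn : G.Connected) (v0 : G.V) :
    ∃ K : ℕ, ∀ (f : G.V → ℤ) (v : G.V),
      |f v - f v0| ≤ K * ∑ e, |f (G.ends1 e) - f (G.ends2 e)| := by
  choose L hL using fun v => exists_abs_sub_le_of_reflTransGen (hconn v0 v)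
  refine ⟨∑ v, L v, fun f v => (hL v f).trans ?_⟩
  gcongr
  exact Finset.single_le_sum (fun v _ => Nat.zero_le (L v)) (Finset.mem_univ v)

/-- Coercivity: the quadratic part of the energy dominates its linear part, since
`(∑ |df|)² ≤ |E| ∑ (df)²` and `|f| ≤ K ∑ |df|` on a connected graph. -/
lemma exists_abs_le_of_energy_nonpos (hconn : G.Connected) (μ : G.V → ℝ) (D : G.V → ℤ)
    (v0 : G.V) : ∃ N : ℝ, ∀ f : G.V → ℤ, f v0 = 0 → energy μ D f ≤ 0 →
      ∀ v, |(f v : ℝ)| ≤ N := by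
  obtain ⟨K, hK⟩ := hconn.exists_abs_sub_le v0
  set C := ∑ v, |(D v : ℝ) - μ v|
  set m := Fintype.card G.E
  refine ⟨K * (2 * C * K * m), fun f hf0 hf v => ?_⟩
  set s : ℤ := ∑ e, |f (G.ends1 e) - f (G.ends2 e)|
  set Q : ℤ := ∑ e, (f (G.ends1 e) - f (G.ends2 e)) ^ 2
  have hC : 0 ≤ C := Finset.sum_nonneg fun v _ => abs_nonneg _
  have hs0 : (0 : ℝ) ≤ s := by exact_mod_cast Finset.sum_nonneg fun e _ => abs_nonneg _
  have hfK : ∀ v, |(f v : ℝ)| ≤ K * s := fun v => by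
    exact_mod_cast (sub_zero (f v) ▸ hf0 ▸ hK f v)
  have hlin : ∑ v, ((D v : ℝ) - μ v) * f v ≤ C * (K * s) := by
    rw [Finset.sum_mul]
    refine Finset.sum_le_sum fun v _ => ?_
    calc ((D v : ℝ) - μ v) * f v ≤ |((D v : ℝ) - μ v) * f v| := le_abs_self _
      _ = |(D v : ℝ) - μ v| * |(f v : ℝ)| := abs_mul _ _
      _ ≤ |(D v : ℝ) - μ v| * (K * s) := by gcongr; exact hfK v
  have hQ : (Q : ℝ) ≤ 2 * (C * (K * s)) := by
    have : (Q : ℝ) - 2 * ∑ v, ((D v : ℝ) - μ v) * f v ≤ 0 := hf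
    linarith
  have hCS : (s : ℝ) ^ 2 ≤ m * Q := by
    have := sq_sum_le_card_mul_sum_sq (s := Finset.univ)
      (f := fun e => |f (G.ends1 e) - f (G.ends2 e)|)
    simp only [sq_abs, Finset.card_univ] at this
    exact_mod_cast this
  have hs : (s : ℝ) ≤ 2 * C * K * m := by
    rcases hs0.eq_or_lt with h | h
    · rw [← h]; positivity
    · refine le_of_mul_le_mul_right ?_ h
      nlinarith
  calc |(f v : ℝ)| ≤ K * s := hfK v
    _ ≤ K * (2 * C * K * m) := by gcongr

lemma exists_energy_lexMin (hconn : G.Connected) (μ : G.V → ℝ) (D : G.V → ℤ) (v0 : G.V) :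
    ∃ f : G.V → ℤ, f v0 = 0 ∧ ∀ g : G.V → ℤ, g v0 = 0 →
      energy μ D f < energy μ D g ∨ energy μ D f = energy μ D g ∧ ∑ v, g v ≤ ∑ v, f v := by
  obtain ⟨N, hN⟩ := exists_abs_le_of_energy_nonpos hconn μ D v0
  set S := {g : G.V → ℤ | g v0 = 0 ∧ energy μ D g ≤ 0}
  have hS : S.Finite := (Set.finite_Icc (fun _ => -⌈N⌉) fun _ => ⌈N⌉).subset fun g hg => by
    have hbound := fun v => abs_le.mp (hN g hg.1 hg.2 v)
    have hceil := Int.le_ceil N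
    refine ⟨fun v => ?_, fun v => ?_⟩
    · exact_mod_cast (show (-⌈N⌉ : ℝ) ≤ g v by linarith [(hbound v).1])
    · exact_mod_cast (show (g v : ℝ) ≤ ⌈N⌉ by linarith [(hbound v).2])
  have h0 : (0 : G.V → ℤ) ∈ S := ⟨rfl, by simp [energy]⟩
  obtain ⟨f, ⟨hf0, hfS⟩, hmin⟩ :=
    S.exists_min_image (fun g => toLex (energy μ D g, -∑ v, g v)) hS ⟨0, h0⟩
  refine ⟨f, hf0, fun g hg0 => ?_⟩
  by_cases hgS : energy μ D g ≤ 0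
  · rcases Prod.Lex.toLex_le_toLex.mp (hmin g ⟨hg0, hgS⟩) with h | ⟨h, h'⟩
    · exact Or.inl h
    · exact Or.inr ⟨h, neg_le_neg_iff.mp h'⟩
  · exact Or.inl (hfS.trans_lt (not_le.mp hgS))

theorem exists_quasistable_sub_prin (hconn : G.Connected) {μ : G.V → ℝ} {d : ℤ}
    (hμ : G.IsPolarization μ d) {D : G.V → ℤ} (hD : G.deg D = d) (v0 : G.V) :
    ∃ f : G.V → ℤ, G.Quasistable μ v0 fun v => D v - G.prin f v := by
  obtain ⟨f, hf0, hmin⟩ := exists_energy_lexMin hconn μ D v0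
  refine ⟨f, fun B hB => ?_⟩
  by_cases hv0 : v0 ∈ B
  · set g : G.V → ℤ := fun v => f v - (if v ∈ B then 1 else 0) + 1
    have hg0 : g v0 = 0 := by simp [g, hf0, hv0]
    have hgE : energy μ D g = energy μ D f + 2 * G.beta μ (fun v => D v - G.prin f v) B :=
      (energy_add_const hμ hD _ 1).trans (energy_sub_indicator μ D f B)
    have hgsum : ∑ v, f v < ∑ v, g v := by
      have hcard : B.card < Fintype.card G.V := Finset.card_lt_card hB
      simp only [g, Finset.sum_add_distrib, Finset.sum_sub_distrib, Finset.sum_boole,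
        Finset.filter_mem_eq_inter, Finset.univ_inter, Finset.sum_const, Finset.card_univ,
        Int.nsmul_eq_mul, mul_one]
      omega
    rcases hmin g hg0 with h | ⟨h, h'⟩
    · have hpos : 0 < G.beta μ (fun v => D v - G.prin f v) B := by linarith
      exact ⟨hpos.le, fun _ => hpos⟩
    · exact absurd h' (not_le.mpr hgsum)
  · set g : G.V → ℤ := fun v => f v - if v ∈ B then 1 else 0
    have hg0 : g v0 = 0 := by simp [g, hf0, hv0]
    have hgE : energy μ D g = energy μ D f + 2 * G.beta μ (fun v => D v - G.prin f v) B :=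
      energy_sub_indicator μ D f B
    refine ⟨?_, fun h => absurd h hv0⟩
    rcases hmin g hg0 with h | ⟨h, -⟩ <;> linarith

end Multigraph

/-- Every degree-`d` divisor on a finite connected multigraph is
equivalent, modulo principal divisors, to a unique `(v0,μ)`-quasistable degree-`d`
divisor. -/
theorem exists_unique_quasistable_representative (G : Multigraph) (hconn : G.Connected)
    (d : ℤ) (μ : G.V → ℝ) (hμ : G.IsPolarization μ d) (v0 : G.V)
    (D : G.V → ℤ) (hD : G.deg D = d) :
    ∃! D' : G.V → ℤ, G.deg D' = d ∧ G.Quasistable μ v0 D' ∧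
      ∃ f : G.V → ℤ, ∀ v, D v - D' v = G.prin f v := by
  obtain ⟨f, hq⟩ := exists_quasistable_sub_prin hconn hμ hD v0
  have hdeg : G.deg (fun v => D v - G.prin f v) = d := by
    rw [← hD]
    simp only [deg, Finset.sum_sub_distrib, sum_prin_eq_zero, sub_zero]
  refine ⟨_, ⟨hdeg, hq, f, fun v => by ring⟩, ?_⟩
  rintro D' ⟨-, hq', g, hg⟩
  have hdiff : ∀ v, (D v - G.prin f v) - D' v = G.prin (fun w => g w - f w) v := fun v => by
    rw [prin_sub]
    linarith [hg v]
  exact (eq_of_quasistable_of_sub_eq_prin hμ hdeg hq hq' hdiff).symm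
end

section
/- Let Γ be a finite connected multigraph, v0 a vertex of Γ, μ a degree-d polarization on Γ, and ι : Γ → Γ' a specialization (contraction of a subset of edges). If (E,D) is a (v0,μ)-quasistable degree-d pseudo-divisor on Γ, then ι_*(E,D) is a (ι(v0), ι_*(μ))-quasistable degree-d pseudo-divisor on Γ'. -/
/-!
The specialization `ι` induces a contraction `c : Γ^E → Γ'^{E'}` of the subdivisions
(an exceptional vertex over a contracted edge goes to the image of that edge), and both
`ι_*(E,D)` and `ι_*(μ)^{E'}` are pushforwards along `c`. For `A' ⊆ V(Γ'^{E'})` with preimage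
`A := c⁻¹(A')`, pushforward preserves the sums over `A`, and the edges joining `A` to `Aᶜ`
are exactly the non-contracted ones, which correspond to the edges joining `A'` to `A'ᶜ`.
Hence `β_{c_*D}(A') = β_D(A)`; since `c` is surjective, `A` is proper when `A'` is, and
`v0 ∈ A` when `ι(v0) ∈ A'`.
-/

namespace Multigraph

variable {H H' : Multigraph}

theorem joins_ends (e : H.E) : H.Joins e (H.ends1 e) (H.ends2 e) := Or.inl ⟨rfl, rfl⟩

theorem Joins.symm {e : H.E} {v w : H.V} (h : H.Joins e v w) : H.Joins e w v := Or.symm h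

theorem Joins.eq_or_swap {e : H.E} {v w v' w' : H.V} (h : H.Joins e v w)
    (h' : H.Joins e v' w') : (v = v' ∧ w = w') ∨ (v = w' ∧ w = v') := by
  rcases h with ⟨rfl, rfl⟩ | ⟨rfl, rfl⟩ <;> rcases h' with ⟨h1, h2⟩ | ⟨h1, h2⟩ <;> tauto

theorem Joins.map {e : H.E} {v w : H.V} (h : H.Joins e v w) {φ : H.V → H'.V} {e' : H'.E}
    (h' : H'.Joins e' (φ (H.ends1 e)) (φ (H.ends2 e))) : H'.Joins e' (φ v) (φ w) := by
  rcases h with ⟨rfl, rfl⟩ | ⟨rfl, rfl⟩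
  exacts [h', h'.symm]

theorem mem_betweenSet_compl_s6 {A : Finset H.V} {e : H.E} :
    e ∈ H.betweenSet A Aᶜ ↔ ∃ v w, v ∈ A ∧ w ∉ A ∧ H.Joins e v w := by
  simp only [betweenSet, Finset.mem_filter, Finset.mem_univ, true_and, Finset.mem_sdiff,
    Finset.mem_compl, not_not]
  constructor
  · rintro ⟨v, ⟨hv, -⟩, w, ⟨-, hw⟩, hj⟩
    exact ⟨v, w, hv, hw, hj⟩
  · rintro ⟨v, w, hv, hw, hj⟩
    exact ⟨v, ⟨hv, hv⟩, w, ⟨hw, hw⟩, hj⟩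

/-- The data of a `Spec` except the connectedness of its fibers. -/
structure Contraction (H H' : Multigraph) where
  vmap : H.V → H'.V
  emap : H'.E → H.E
  emap_inj : Function.Injective emap
  vmap_surj : Function.Surjective vmap
  joins_emap : ∀ e' : H'.E,
    H'.Joins e' (vmap (H.ends1 (emap e'))) (vmap (H.ends2 (emap e')))
  glue : ∀ e : H.E, (¬ ∃ e', emap e' = e) → vmap (H.ends1 e) = vmap (H.ends2 e)

namespace Contraction

variable (c : Contraction H H')

def push {M : Type*} [AddCommMonoid M] (g : H.V → M) : H'.V → M :=
  fun v' => ∑ v, if c.vmap v = v' then g v else 0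

def comap (A' : Finset H'.V) : Finset H.V := Finset.univ.filter fun v => c.vmap v ∈ A'

theorem mem_comap {A' : Finset H'.V} {v : H.V} : v ∈ c.comap A' ↔ c.vmap v ∈ A' := by
  simp [comap]

theorem sum_push {M : Type*} [AddCommMonoid M] (g : H.V → M) (A' : Finset H'.V) :
    ∑ v' ∈ A', c.push g v' = ∑ v ∈ c.comap A', g v := by
  simp only [push, comap, Finset.sum_filter]
  rw [Finset.sum_comm]
  exact Finset.sum_congr rfl fun v _ => Finset.sum_ite_eq A' (c.vmap v) _

theorem sum_push_univ {M : Type*} [AddCommMonoid M] (g : H.V → M) :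
    ∑ v', c.push g v' = ∑ v, g v := by
  rw [sum_push]
  exact Finset.sum_congr (Finset.filter_true_of_mem fun v _ => Finset.mem_univ _) fun _ _ => rfl

theorem comap_ssubset_univ {A' : Finset H'.V} (h : A' ⊂ Finset.univ) :
    c.comap A' ⊂ Finset.univ := by
  obtain ⟨v', -, hv'⟩ := Finset.exists_of_ssubset h
  obtain ⟨v, rfl⟩ := c.vmap_surj v'
  exact Finset.ssubset_univ_iff.mpr fun hall => hv' (c.mem_comap.mp (hall ▸ Finset.mem_univ v))

theorem betweenSet_comap (A' : Finset H'.V) :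
    H.betweenSet (c.comap A') (c.comap A')ᶜ = (H'.betweenSet A' A'ᶜ).image c.emap := by
  ext e
  simp only [Finset.mem_image, mem_betweenSet_compl_s6, mem_comap]
  constructor
  · rintro ⟨v, w, hv, hw, hj⟩
    by_cases he : ∃ e', c.emap e' = e
    · obtain ⟨e', rfl⟩ := he
      exact ⟨e', ⟨_, _, hv, hw, hj.map (c.joins_emap e')⟩, rfl⟩
    · have hglue := c.glue e he
      rcases hj with ⟨rfl, rfl⟩ | ⟨rfl, rfl⟩
      exacts [absurd (hglue ▸ hv) hw, absurd (hglue ▸ hv) hw]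
  · rintro ⟨e', ⟨v', w', hv', hw', hj'⟩, rfl⟩
    rcases (c.joins_emap e').eq_or_swap hj' with ⟨h1, h2⟩ | ⟨h1, h2⟩
    · exact ⟨_, _, h1 ▸ hv', h2 ▸ hw', joins_ends _⟩
    · exact ⟨_, _, h2 ▸ hv', h1 ▸ hw', (joins_ends _).symm⟩

theorem delta_comap (A' : Finset H'.V) : H.delta (c.comap A') = H'.delta A' := by
  rw [delta, delta, betweenSet_comap, Finset.card_image_of_injective _ c.emap_inj]

theorem beta_push (μ : H.V → ℝ) (D : H.V → ℤ) (A' : Finset H'.V) :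
    H'.beta (c.push μ) (c.push D) A' = H.beta μ D (c.comap A') := by
  have hD : ∀ v', ((c.push D v' : ℤ) : ℝ) = c.push (fun v => (D v : ℝ)) v' := by
    intro v'
    simp only [push, Int.cast_sum, Int.cast_ite, Int.cast_zero]
  simp only [beta, hD, sum_push, delta_comap]

theorem quasistable_push {μ : H.V → ℝ} {v0 : H.V} {D : H.V → ℤ}
    (hq : H.Quasistable μ v0 D) : H'.Quasistable (c.push μ) (c.vmap v0) (c.push D) := by
  intro A' hA'
  obtain ⟨hnonneg, hpos⟩ := hq _ (c.comap_ssubset_univ hA')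
  rw [beta_push]
  exact ⟨hnonneg, fun hv0 => hpos (c.mem_comap.mpr hv0)⟩

end Contraction

end Multigraph

namespace Multigraph.Spec

variable {G G' : Multigraph} (f : Multigraph.Spec G G') (S : Finset G.E)

theorem mem_pushEdges {e' : G'.E} : e' ∈ f.pushEdges S ↔ f.emap e' ∈ S := by
  simp [pushEdges]

theorem mem_contracted {e : G.E} : e ∈ f.contracted ↔ ¬ ∃ e', f.emap e' = e := by
  simp [contracted]

/-- The exceptional vertex over a contracted edge goes to the common image of its ends. -/
noncomputable def subdivVmap : G.subV S → G'.subV (f.pushEdges S)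
  | Sum.inl v => Sum.inl (f.vmap v)
  | Sum.inr ⟨e, he⟩ =>
    if h : ∃ e', f.emap e' = e then
      Sum.inr ⟨h.choose, (f.mem_pushEdges S).mpr (by rw [h.choose_spec]; exact he)⟩
    else Sum.inl (f.vmap (G.ends1 e))

theorem subdivVmap_inl (v : G.V) : f.subdivVmap S (Sum.inl v) = Sum.inl (f.vmap v) := rfl

theorem subdivVmap_inr_emap {e' : G'.E} (he : f.emap e' ∈ S) :
    f.subdivVmap S (Sum.inr ⟨f.emap e', he⟩) = Sum.inr ⟨e', (f.mem_pushEdges S).mpr he⟩ := by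
  have h : ∃ e'', f.emap e'' = f.emap e' := ⟨e', rfl⟩
  simp only [subdivVmap, dif_pos h]
  exact congrArg Sum.inr (Subtype.ext (f.emap_inj h.choose_spec))

theorem subdivVmap_inr_contracted {e : G.E} (he : e ∈ S) (hc : ¬ ∃ e', f.emap e' = e) :
    f.subdivVmap S (Sum.inr ⟨e, he⟩) = Sum.inl (f.vmap (G.ends1 e)) := by
  simp [subdivVmap, hc]

theorem subdivVmap_inr_eq_inl_iff (e : {e // e ∈ S}) (v' : G'.V) :
    f.subdivVmap S (Sum.inr e) = Sum.inl v' ↔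
      e.1 ∈ f.contracted ∧ f.vmap (G.ends1 e) = v' := by
  obtain ⟨e, he⟩ := e
  rw [mem_contracted]
  by_cases hc : ∃ e', f.emap e' = e
  · obtain ⟨e', rfl⟩ := hc
    simp [subdivVmap_inr_emap]
  · simp [subdivVmap_inr_contracted _ _ he hc, hc]

theorem subdivVmap_eq_inr_iff (y : G.subV S) (x' : {e' // e' ∈ f.pushEdges S}) :
    f.subdivVmap S y = Sum.inr x' ↔ y = Sum.inr ⟨f.emap x', (f.mem_pushEdges S).mp x'.2⟩ := by
  obtain ⟨x', hx'⟩ := x'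
  constructor
  · rcases y with v | ⟨e, he⟩
    · simp [subdivVmap]
    · by_cases hc : ∃ e', f.emap e' = e
      · obtain ⟨e', rfl⟩ := hc
        rw [subdivVmap_inr_emap]
        simp +contextual
      · simp [subdivVmap_inr_contracted _ _ he hc]
  · rintro rfl
    exact f.subdivVmap_inr_emap S _

def reverses (e' : G'.E) : Bool := decide (f.vmap (G.ends1 (f.emap e')) ≠ G'.ends1 e')

/-- Each half of a subdivided edge of `G'` is sent to the half of the corresponding edge of `G`
with the matching endpoint. -/
def subdivEmap : (G'.subdiv (f.pushEdges S)).E → (G.subdiv S).E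
  | Sum.inl ⟨e', he'⟩ => Sum.inl ⟨f.emap e', fun hc => he' ((f.mem_pushEdges S).mpr hc)⟩
  | Sum.inr (⟨e', he'⟩, b) =>
    Sum.inr (⟨f.emap e', (f.mem_pushEdges S).mp he'⟩, xor b (f.reverses e'))

theorem subdivEmap_injective : Function.Injective (f.subdivEmap S) := by
  rintro (⟨e1, h1⟩ | ⟨⟨e1, h1⟩, b1⟩) (⟨e2, h2⟩ | ⟨⟨e2, h2⟩, b2⟩) h
  · obtain rfl := f.emap_inj (congrArg Subtype.val (Sum.inl.inj h))
    rfl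
  · exact absurd h Sum.inl_ne_inr
  · exact absurd h Sum.inr_ne_inl
  · obtain ⟨he, hb⟩ := Prod.mk.inj (Sum.inr.inj h)
    obtain rfl := f.emap_inj (congrArg Subtype.val he)
    obtain rfl := Bool.xor_left_inj.mp hb
    rfl

theorem vmap_ends_of_not_reverses {e' : G'.E} (h : f.reverses e' = false) :
    f.vmap (G.ends1 (f.emap e')) = G'.ends1 e' ∧ f.vmap (G.ends2 (f.emap e')) = G'.ends2 e' := by
  simp only [reverses, decide_eq_false_iff_not, not_not] at h
  rcases f.joins_comm e' with ⟨h1, h2⟩ | ⟨h1, h2⟩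
  · exact ⟨h1.symm, h2.symm⟩
  · exact ⟨h, h1.symm.trans (h.symm.trans h2.symm)⟩

theorem vmap_ends_of_reverses {e' : G'.E} (h : f.reverses e' = true) :
    f.vmap (G.ends1 (f.emap e')) = G'.ends2 e' ∧ f.vmap (G.ends2 (f.emap e')) = G'.ends1 e' := by
  simp only [reverses, decide_eq_true_eq] at h
  rcases f.joins_comm e' with ⟨h1, h2⟩ | ⟨h1, h2⟩
  · exact absurd h1.symm h
  · exact ⟨h2.symm, h1.symm⟩

theorem joins_subdivEmap (ε' : (G'.subdiv (f.pushEdges S)).E) :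
    (G'.subdiv (f.pushEdges S)).Joins ε'
      (f.subdivVmap S ((G.subdiv S).ends1 (f.subdivEmap S ε')))
      (f.subdivVmap S ((G.subdiv S).ends2 (f.subdivEmap S ε'))) := by
  rcases ε' with ⟨e', he'⟩ | ⟨⟨e', he'⟩, b⟩
  · simpa [Joins, subdiv, subdivEmap, subdivVmap_inl] using f.joins_comm e'
  · cases hr : f.reverses e'
    · obtain ⟨h1, h2⟩ := f.vmap_ends_of_not_reverses hr
      cases b <;> simp [Joins, subdiv, subdivEmap, subdivVmap_inl, subdivVmap_inr_emap, hr, h1, h2]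
    · obtain ⟨h1, h2⟩ := f.vmap_ends_of_reverses hr
      cases b <;> simp [Joins, subdiv, subdivEmap, subdivVmap_inl, subdivVmap_inr_emap, hr, h1, h2]

theorem subdivVmap_ends_of_not_mem_range {ε : (G.subdiv S).E}
    (h : ¬ ∃ ε', f.subdivEmap S ε' = ε) :
    f.subdivVmap S ((G.subdiv S).ends1 ε) = f.subdivVmap S ((G.subdiv S).ends2 ε) := by
  rcases ε with ⟨e, he⟩ | ⟨⟨e, he⟩, b⟩
  · by_cases hc : ∃ e', f.emap e' = e
    · obtain ⟨e', rfl⟩ := hc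
      exact absurd ⟨Sum.inl ⟨e', fun hm => he ((f.mem_pushEdges S).mp hm)⟩, rfl⟩ h
    · simp [subdiv, subdivVmap_inl, f.glue e hc]
  · by_cases hc : ∃ e', f.emap e' = e
    · obtain ⟨e', rfl⟩ := hc
      refine absurd ⟨Sum.inr (⟨e', (f.mem_pushEdges S).mpr he⟩, xor b (f.reverses e')), ?_⟩ h
      simp only [subdivEmap, Bool.xor_assoc, Bool.xor_self, Bool.xor_false]
      rfl
    · cases b <;>
        simp [subdiv, subdivVmap_inl, f.subdivVmap_inr_contracted S he hc, f.glue e hc]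

/-- The specialization `G^S → G'^{S ∩ E(G')}` induced by `f`. -/
noncomputable def subdivContraction : Contraction (G.subdiv S) (G'.subdiv (f.pushEdges S)) where
  vmap := f.subdivVmap S
  emap := f.subdivEmap S
  emap_inj := f.subdivEmap_injective S
  vmap_surj := by
    rintro (v' | ⟨e', he'⟩)
    · obtain ⟨v, rfl⟩ := f.vmap_surj v'
      exact ⟨Sum.inl v, rfl⟩
    · exact ⟨_, f.subdivVmap_inr_emap S ((f.mem_pushEdges S).mp he')⟩
  joins_emap := f.joins_subdivEmap S
  glue _ := f.subdivVmap_ends_of_not_mem_range S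

theorem subdivContraction_push_apply {M : Type*} [AddCommMonoid M] (g : G.subV S → M)
    (x' : G'.subV (f.pushEdges S)) :
    (f.subdivContraction S).push g x' =
      (∑ v, if Sum.inl (f.vmap v) = x' then g (Sum.inl v) else 0) +
        ∑ e : {e // e ∈ S}, if f.subdivVmap S (Sum.inr e) = x' then g (Sum.inr e) else 0 :=
  Fintype.sum_sum_type _

theorem pushPDFun_eq_push (D : G.subV S → ℤ) :
    f.pushPDFun S D = (f.subdivContraction S).push D := by
  funext x'
  rw [subdivContraction_push_apply]
  rcases x' with v' | x'
  · simp only [pushPDFun, Sum.inl.injEq, subdivVmap_inr_eq_inl_iff]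
    rw [← Finset.univ_eq_attach]
  · simp [pushPDFun, subdivVmap_eq_inr_iff]

theorem subPol_pushPol_eq_push (μ : G.V → ℝ) :
    G'.subPol (f.pushEdges S) (f.pushPol μ) = (f.subdivContraction S).push (G.subPol S μ) := by
  funext x'
  rw [subdivContraction_push_apply]
  rcases x' with v' | x' <;> simp [subPol, pushPol]

end Multigraph.Spec

open Multigraph

theorem pushforward_quasistable_general (G G' : Multigraph)
    (f : Multigraph.Spec G G') (d : ℤ) (μ : G.V → ℝ)
    (v0 : G.V) (S : Finset G.E) (D : G.subV S → ℤ)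
    (h : G.QSPseudo μ v0 d S D) :
    G'.QSPseudo (f.pushPol μ) (f.vmap v0) d (f.pushEdges S) (f.pushPDFun S D) := by
  obtain ⟨hpseudo, hdeg, hqs⟩ := h
  refine ⟨fun x => hpseudo _, ?_, ?_⟩
  · rw [f.pushPDFun_eq_push S D]
    exact ((f.subdivContraction S).sum_push_univ D).trans hdeg
  · rw [f.pushPDFun_eq_push S D, f.subPol_pushPol_eq_push S μ]
    exact (f.subdivContraction S).quasistable_push hqs

/-- If `(E,D)` is a `(v0,μ)`-quasistable degree-`d` pseudo-divisor on `Γ`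
and `ι : Γ → Γ'` is a specialization, then `ι_*(E,D)` is a `(ι(v0),ι_*(μ))`-quasistable
degree-`d` pseudo-divisor on `Γ'`. -/
theorem pushforward_quasistable (G G' : Multigraph) (hconn : G.Connected)
    (f : Multigraph.Spec G G') (d : ℤ) (μ : G.V → ℝ) (hμ : G.IsPolarization μ d)
    (v0 : G.V) (S : Finset G.E) (D : G.subV S → ℤ)
    (h : G.QSPseudo μ v0 d S D) :
    G'.QSPseudo (f.pushPol μ) (f.vmap v0) d (f.pushEdges S) (f.pushPDFun S D) :=
  pushforward_quasistable_general G G' f d μ v0 S D h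
end
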